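/- arXiv:0802.0075 — 2 statements merged into one kernel-verified Lean document; each statement's English description precedes it below -/
import Mathlib

section
/- The exponential generating function of the Motzkin numbers satisfies Σ_{n≥0} m_n t^n / n! = exp(t) · I_1(2t)/t, where I_1(x) = Σ_{r≥0} (x/2)^{1+2r}/(r!(1+r)!), as an identity of formal power series (equivalently of convergent series for all real t ≠ 0). -/
open Finset

noncomputable def motzkin (n : ℕ) : ℝ :=
  ∑ k ∈ Finset.range (n / 2 + 1),
    (n.factorial : ℝ) / ((k.factorial : ℝ) * ((k + 1).factorial : ℝ) * ((n - 2 * k).factorial : ℝ))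

/-- Modified Bessel function of the first kind of order `1`. -/
noncomputable def besselI1 (x : ℝ) : ℝ :=
  ∑' r : ℕ, (x / 2) ^ (1 + 2 * r) / ((r.factorial : ℝ) * ((1 + r).factorial : ℝ))

theorem motzkin_egf (t : ℝ) (ht : t ≠ 0) :
    HasSum (fun n : ℕ => motzkin n * t ^ n / (n.factorial : ℝ))
      (Real.exp t * besselI1 (2 * t) / t) := by
  -- the exponential series
  set a : ℕ → ℝ := fun n => t ^ n / n.factorial with ha
  have hA : HasSum a (Real.exp t) := by
    rw [Real.exp_eq_exp_ℝ]
    exact NormedSpace.expSeries_div_hasSum_exp t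
  have hAnorm : Summable fun n => ‖a n‖ := by
    have := Real.summable_pow_div_factorial |t|
    apply this.congr
    intro n
    simp [ha, abs_div, abs_pow]
  -- the Bessel series, reindexed on even indices
  set b : ℕ → ℝ := fun m =>
    if m % 2 = 0 then t ^ m / ((m / 2).factorial * ((m / 2) + 1).factorial) else 0 with hb
  have hbcomp : ∀ r : ℕ, b (2 * r) = t ^ (2 * r) / (r.factorial * (r + 1).factorial) := by
    intro r
    simp [hb, Nat.mul_div_cancel_left r two_pos]
  have hbodd : ∀ m, m % 2 ≠ 0 → b m = 0 := by
    intro m hm; simp [hb, hm]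
  have hinj : Function.Injective fun r : ℕ => 2 * r := fun x y h => by
    simp only [] at h; omega
  have hzero : ∀ m, m ∉ Set.range (fun r : ℕ => 2 * r) → b m = 0 := by
    intro m hm
    apply hbodd
    intro h
    exact hm ⟨m / 2, show 2 * (m / 2) = m by omega⟩
  have hgnorm : Summable fun r : ℕ => ‖b (2 * r)‖ := by
    apply Summable.of_nonneg_of_le (fun r => norm_nonneg _) (fun r => ?_)
      (Real.summable_pow_div_factorial (t ^ 2))
    rw [hbcomp]
    rw [Real.norm_eq_abs, abs_div]
    rw [div_le_div_iff₀ (by positivity) (by positivity)]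
    have h1 : |t ^ (2 * r)| = (t ^ 2) ^ r := by
      rw [abs_pow, pow_mul, sq_abs]
    rw [h1]
    have h2 : (r.factorial : ℝ) ≤ |(r.factorial : ℝ) * ((r + 1).factorial : ℝ)| := by
      rw [abs_of_nonneg (by positivity)]
      nlinarith [Nat.one_le_cast (α := ℝ) |>.2 (Nat.factorial_pos (r+1)),
        Nat.cast_pos (α := ℝ) |>.2 (Nat.factorial_pos r)]
    nlinarith [pow_nonneg (sq_nonneg t) r, Nat.cast_pos (α := ℝ) |>.2 (Nat.factorial_pos r)]
  have hBnorm : Summable fun m => ‖b m‖ := by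
    rw [← hinj.summable_iff (by intro m hm; simp [hzero m hm])]
    exact hgnorm
  have hBsum : Summable b := hBnorm.of_norm
  -- identify the value of the b-series with besselI1 (2t) / t
  have hBval : (∑' m, b m) = besselI1 (2 * t) / t := by
    have h1 : besselI1 (2 * t) = ∑' r : ℕ, t * b (2 * r) := by
      unfold besselI1
      congr 1
      funext r
      rw [hbcomp]
      have : 2 * t / 2 = t := by ring
      rw [this, pow_add, pow_one]
      have : ((1 + r).factorial : ℝ) = ((r + 1).factorial : ℝ) := by rw [add_comm]
      rw [this]
      ring
    rw [h1, tsum_mul_left, ← hinj.tsum_eq (by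
      intro m hm
      by_contra hc
      exact hm (hzero m hc))]
    field_simp
  -- Cauchy product
  have hC := hasSum_sum_range_mul_of_summable_norm hAnorm hBnorm
  rw [hA.tsum_eq, hBval, ← mul_div_assoc] at hC
  -- identify the coefficients
  have key : (fun n : ℕ => motzkin n * t ^ n / (n.factorial : ℝ)) =
      fun n => ∑ k ∈ Finset.range (n + 1), a k * b (n - k) := by
    funext n
    have hsub : (Finset.range (n / 2 + 1)).image (fun r => n - 2 * r) ⊆ Finset.range (n + 1) := by
      intro k hk
      simp only [Finset.mem_image, Finset.mem_range] at hk ⊢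
      omega
    have hinj2 : ∀ x ∈ Finset.range (n / 2 + 1), ∀ y ∈ Finset.range (n / 2 + 1),
        n - 2 * x = n - 2 * y → x = y := by
      intro x hx y hy h
      simp only [Finset.mem_range] at hx hy
      omega
    rw [← Finset.sum_subset hsub, Finset.sum_image hinj2]
    · unfold motzkin
      rw [Finset.sum_mul, Finset.sum_div]
      apply Finset.sum_congr rfl
      intro r hr
      simp only [Finset.mem_range] at hr
      have h2r : 2 * r ≤ n := by omega
      have hnn : n - (n - 2 * r) = 2 * r := by omega
      rw [hnn, hbcomp, ha]
      have hpow : t ^ n = t ^ (n - 2 * r) * t ^ (2 * r) := by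
        rw [← pow_add]; congr 1; omega
      rw [hpow]
      have f1 : ((n - 2 * r).factorial : ℝ) ≠ 0 := Nat.cast_ne_zero.2 (Nat.factorial_ne_zero _)
      have f2 : (r.factorial : ℝ) ≠ 0 := Nat.cast_ne_zero.2 (Nat.factorial_ne_zero _)
      have f3 : ((r + 1).factorial : ℝ) ≠ 0 := Nat.cast_ne_zero.2 (Nat.factorial_ne_zero _)
      have f4 : (n.factorial : ℝ) ≠ 0 := Nat.cast_ne_zero.2 (Nat.factorial_ne_zero _)
      field_simp
    · intro k hk hknot
      simp only [Finset.mem_range] at hk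
      have hb0 : b (n - k) = 0 := by
        apply hbodd
        intro heven
        apply hknot
        simp only [Finset.mem_image, Finset.mem_range]
        exact ⟨(n - k) / 2, by omega, by omega⟩
      rw [hb0, mul_zero]
  rw [key]
  have hC := hasSum_sum_range_mul_of_summable_norm hAnorm hBnorm
  rw [hA.tsum_eq, hBval, ← mul_div_assoc] at hC
  exact hC
end

section
/- The hybrid polynomials Π_n(x,y) = n! Σ_{k=0}^{⌊n/2⌋} y^{n-2k} x^k/((k!)^2(n-2k)!) have the ordinary generating function Σ_{n≥0} Π_n(x,y) t^n = 1/√(1 - 2yt + (y^2-4x)t^2), valid as an identity of formal power series in t over ℝ, for fixed real x, y (equivalently for real t with |t|·√|y^2-4x| and |t| sufficiently small). -/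
open Finset


lemma central_refl (n : ℕ) (f : ℕ → ℝ) :
    ∑ k ∈ range (n+1), (k : ℝ) * f k * f (n - k)
      = ∑ k ∈ range (n+1), ((n : ℝ) - k) * f k * f (n - k) := by
  rw [← Finset.sum_range_reflect (fun k => (k : ℝ) * f k * f (n - k)) (n+1)]
  apply Finset.sum_congr rfl
  intro k hk
  simp only [Finset.mem_range] at hk
  have h1 : n + 1 - 1 - k = n - k := by omega
  have h2 : n - (n - k) = k := by omega
  have h3 : ((n - k : ℕ) : ℝ) = (n : ℝ) - k := by
    have : k ≤ n := by omega
    push_cast [this]; ring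
  rw [h1, h2, h3]; ring

lemma central_conv (n : ℕ) :
    ∑ k ∈ range (n+1), (Nat.centralBinom k : ℝ) * (Nat.centralBinom (n-k) : ℝ) = 4 ^ n := by
  induction n with
  | zero => simp [Nat.centralBinom]
  | succ n ih =>
    set c : ℕ → ℝ := fun k => (Nat.centralBinom k : ℝ) with hc
    have hrec : ∀ k : ℕ, ((k:ℝ) + 1) * c (k+1) = (4 * k + 2) * c k := by
      intro k
      have := Nat.succ_mul_centralBinom_succ k
      have : ((k + 1) * Nat.centralBinom (k + 1) : ℝ) = (2 * (2 * k + 1) * Nat.centralBinom k : ℝ) := by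
        exact_mod_cast congrArg (Nat.cast : ℕ → ℝ) this
      push_cast at this
      simp only [hc]; push_cast; linarith [this]
    -- half sums
    have half : ∀ m : ℕ, 2 * ∑ k ∈ range (m+1), (k : ℝ) * c k * c (m - k)
        = (m : ℝ) * ∑ k ∈ range (m+1), c k * c (m - k) := by
      intro m
      have := central_refl m c
      rw [two_mul]
      nth_rewrite 2 [this]
      rw [← Finset.sum_add_distrib, Finset.mul_sum]
      apply Finset.sum_congr rfl
      intro k hk; ring
    have key : ((n:ℝ) + 1) * ∑ k ∈ range (n+2), c k * c (n+1-k)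
        = 4 * ((n:ℝ) + 1) * ∑ k ∈ range (n+1), c k * c (n-k) := by
      have e1 : ((n:ℝ) + 1) * ∑ k ∈ range (n+2), c k * c (n+1-k)
          = 2 * ∑ k ∈ range (n+2), (k : ℝ) * c k * c (n+1-k) := by
        rw [half (n+1)]; push_cast; ring
      have e2 : ∑ k ∈ range (n+2), (k : ℝ) * c k * c (n+1-k)
          = ∑ k ∈ range (n+1), ((k:ℝ)+1) * c (k+1) * c (n-k) := by
        rw [Finset.sum_range_succ']
        simp only [Nat.cast_zero, zero_mul, mul_zero]
        rw [add_zero]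
        apply Finset.sum_congr rfl
        intro k hk
        have : n + 1 - (k + 1) = n - k := by omega
        rw [this]; push_cast; ring
      have e3 : ∑ k ∈ range (n+1), ((k:ℝ)+1) * c (k+1) * c (n-k)
          = ∑ k ∈ range (n+1), (4 * (k:ℝ) + 2) * c k * c (n-k) := by
        apply Finset.sum_congr rfl
        intro k hk
        rw [show ((k:ℝ)+1) * c (k+1) * c (n-k) = (((k:ℝ)+1) * c (k+1)) * c (n-k) by ring,
          hrec k]
      have e4 : ∑ k ∈ range (n+1), (4 * (k:ℝ) + 2) * c k * c (n-k)
          = 4 * ∑ k ∈ range (n+1), (k:ℝ) * c k * c (n-k)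
            + 2 * ∑ k ∈ range (n+1), c k * c (n-k) := by
        rw [Finset.mul_sum, Finset.mul_sum, ← Finset.sum_add_distrib]
        apply Finset.sum_congr rfl; intro k hk; ring
      have e5 := half n
      rw [e1, e2, e3, e4]
      nlinarith [e5]
    have hn1 : ((n:ℝ) + 1) ≠ 0 := by positivity
    have := mul_left_cancel₀ hn1 (by rw [key]; ring_nf :
      ((n:ℝ)+1) * ∑ k ∈ range (n+2), c k * c (n+1-k) = ((n:ℝ)+1) * (4 * ∑ k ∈ range (n+1), c k * c (n-k)))
    rw [show n + 1 + 1 = n + 2 from rfl] at *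
    calc ∑ k ∈ range (n+2), c k * c (n+1-k) = 4 * ∑ k ∈ range (n+1), c k * c (n-k) := this
    _ = 4 ^ (n+1) := by rw [ih]; ring


lemma centralBinom_le_four_pow (k : ℕ) : Nat.centralBinom k ≤ 4 ^ k := by
  calc Nat.centralBinom k = (2*k).choose k := rfl
  _ ≤ (2*k+1).choose k := Nat.choose_le_choose k (by omega)
  _ ≤ 4 ^ k := Nat.choose_middle_le_pow k

lemma norm_central_le (u : ℝ) (k : ℕ) :
    ‖(Nat.centralBinom k : ℝ) * u ^ k‖ ≤ (4 * |u|) ^ k := by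
  rw [norm_mul, norm_pow, Real.norm_eq_abs, Real.norm_eq_abs, Nat.abs_cast, mul_pow]
  gcongr
  exact_mod_cast centralBinom_le_four_pow k

lemma summable_norm_central (u : ℝ) (hu : |u| < 1/8) :
    Summable (fun k => ‖(Nat.centralBinom k : ℝ) * u ^ k‖) := by
  apply Summable.of_nonneg_of_le (fun k => norm_nonneg _) (norm_central_le u)
  apply summable_geometric_of_lt_one (by positivity) (by linarith [abs_nonneg u])

lemma hasSum_central (u : ℝ) (hu : |u| < 1/8) :
    HasSum (fun k => (Nat.centralBinom k : ℝ) * u ^ k) (1 / Real.sqrt (1 - 4*u)) := by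
  have habs : |4 * u| < 1/2 := by rw [abs_mul]; simp only [abs_of_nonneg (by norm_num : (0:ℝ) ≤ 4)]; linarith
  have hnorm := summable_norm_central u hu
  have hs : Summable (fun k => (Nat.centralBinom k : ℝ) * u ^ k) := hnorm.of_norm
  set f := ∑' k, (Nat.centralBinom k : ℝ) * u ^ k with hf
  have hcauchy := hasSum_sum_range_mul_of_summable_norm hnorm hnorm
  have hterm : ∀ n : ℕ, ∑ k ∈ range (n+1),
      ((Nat.centralBinom k : ℝ) * u ^ k) * ((Nat.centralBinom (n-k) : ℝ) * u ^ (n-k))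
        = (4*u) ^ n := by
    intro n
    have : ∀ k ∈ range (n+1), ((Nat.centralBinom k : ℝ) * u ^ k) * ((Nat.centralBinom (n-k) : ℝ) * u ^ (n-k))
        = ((Nat.centralBinom k : ℝ) * (Nat.centralBinom (n-k) : ℝ)) * u ^ n := by
      intro k hk
      simp only [Finset.mem_range] at hk
      rw [mul_mul_mul_comm, ← pow_add, show k + (n-k) = n by omega]
    rw [Finset.sum_congr rfl this, ← Finset.sum_mul, central_conv n, mul_pow]
  have hgeom : HasSum (fun n : ℕ => (4*u) ^ n) (1 - 4*u)⁻¹ :=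
    hasSum_geometric_of_norm_lt_one (by rw [Real.norm_eq_abs]; linarith)
  have hff : f * f = (1 - 4*u)⁻¹ := by
    apply HasSum.unique _ hgeom
    convert hcauchy using 2 with n
    · rfl
    · exact (hterm n).symm
  -- positivity of f
  have h14 : (0:ℝ) < 1 - 4*u := by
    have := abs_lt.mp habs; linarith [this.2]
  have hfpos : 0 < f := by
    have htail : ∑' k, ‖(Nat.centralBinom (k+1) : ℝ) * u ^ (k+1)‖ ≤ (4*|u|) / (1 - 4*|u|) := by
      have hsum : Summable (fun k => (4*|u|) ^ (k+1)) := by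
        apply Summable.comp_injective _ (add_left_injective 1)
        apply summable_geometric_of_lt_one (by positivity) (by linarith [abs_nonneg u])
      calc ∑' k, ‖(Nat.centralBinom (k+1) : ℝ) * u ^ (k+1)‖
          ≤ ∑' k, (4*|u|) ^ (k+1) := by
            apply Summable.tsum_le_tsum (fun k => norm_central_le u (k+1)) _ hsum
            exact (summable_nat_add_iff (f := fun k => ‖(Nat.centralBinom k : ℝ) * u ^ k‖) 1).mpr hnorm
        _ = (4*|u|) * ∑' k, (4*|u|) ^ k := by
            rw [← tsum_mul_left]; congr 1; ext k; rw [pow_succ]; ring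
        _ = (4*|u|) / (1 - 4*|u|) := by
            rw [tsum_geometric_of_lt_one (by positivity) (by linarith [abs_nonneg u])]
            rw [div_eq_mul_inv]
    have hlt1 : (4*|u|) / (1 - 4*|u|) < 1 := by
      rw [div_lt_one (by linarith [abs_nonneg u])]; linarith [abs_nonneg u]
    have hsplit : f = 1 + ∑' k, (Nat.centralBinom (k+1) : ℝ) * u ^ (k+1) := by
      rw [hf, Summable.tsum_eq_zero_add hs]
      simp [Nat.centralBinom]
    have hb : |∑' k, (Nat.centralBinom (k+1) : ℝ) * u ^ (k+1)| < 1 := by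
      calc |∑' k, (Nat.centralBinom (k+1) : ℝ) * u ^ (k+1)|
          ≤ ∑' k, ‖(Nat.centralBinom (k+1) : ℝ) * u ^ (k+1)‖ := by
            rw [← Real.norm_eq_abs]
            exact norm_tsum_le_tsum_norm ((summable_nat_add_iff (f := fun k => ‖(Nat.centralBinom k : ℝ) * u ^ k‖) 1).mpr hnorm)
        _ ≤ (4*|u|) / (1 - 4*|u|) := htail
        _ < 1 := hlt1
    have := abs_lt.mp hb
    rw [hsplit]; linarith [this.1]
  -- conclude
  set s := Real.sqrt (1 - 4*u) with hsdef
  have hspos : 0 < s := Real.sqrt_pos.mpr h14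
  have hsq : (s * f)^2 = 1 := by
    rw [mul_pow, Real.sq_sqrt h14.le, sq, hff]
    field_simp
  have habs1 : |s * f| = 1 := by
    rw [← Real.sqrt_sq_eq_abs, hsq, Real.sqrt_one]
  have : s * f = 1 := by rw [abs_of_pos (by positivity)] at habs1; exact habs1
  have hfval : f = 1 / s := by field_simp at this ⊢; linarith [this]
  have := hs.hasSum
  rw [← hf, hfval] at this
  exact this


/-- Hybrid Hermite–Laguerre polynomial. -/
noncomputable def hybridPi (n : ℕ) (x y : ℝ) : ℝ :=
  (n.factorial : ℝ) * ∑ k ∈ Finset.range (n / 2 + 1),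
    y ^ (n - 2 * k) * x ^ k / ((k.factorial : ℝ) ^ 2 * ((n - 2 * k).factorial : ℝ))

lemma nat_fac (n k : ℕ) (h : 2*k ≤ n) :
    Nat.centralBinom k * n.choose (2*k) * (k.factorial * k.factorial * (n-2*k).factorial)
      = n.factorial := by
  have h1 : Nat.centralBinom k * (k.factorial * k.factorial) = (2*k).factorial := by
    have := Nat.choose_mul_factorial_mul_factorial (show k ≤ 2*k by omega)
    rw [show 2*k-k = k by omega] at this
    rw [Nat.centralBinom, ← this]; ring
  have h2 := Nat.choose_mul_factorial_mul_factorial h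
  calc Nat.centralBinom k * n.choose (2*k) * (k.factorial * k.factorial * (n-2*k).factorial)
      = n.choose (2*k) * (Nat.centralBinom k * (k.factorial * k.factorial)) * (n-2*k).factorial := by ring
    _ = n.choose (2*k) * (2*k).factorial * (n-2*k).factorial := by rw [h1]
    _ = n.factorial := h2

def fiberEquiv (n : ℕ) : {k // k ∈ Finset.range (n/2+1)} ≃ ((fun q : ℕ × ℕ => 2*q.1 + q.2) ⁻¹' {n}) where
  toFun k := ⟨(k.1, n - 2*k.1), by
    have := Finset.mem_range.mp k.2
    simp only [Set.mem_preimage, Set.mem_singleton_iff]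
    omega⟩
  invFun p := ⟨p.1.1, by
    have hp := p.2
    simp only [Set.mem_preimage, Set.mem_singleton_iff] at hp
    simp only [Finset.mem_range]
    omega⟩
  left_inv k := Subtype.ext rfl
  right_inv p := by
    have hp := p.2
    simp only [Set.mem_preimage, Set.mem_singleton_iff] at hp
    apply Subtype.ext
    have hm : n - 2 * p.1.1 = p.1.2 := by omega
    simp only [hm]


/-- Ordinary generating function of the hybrid polynomials: for fixed real
`x`, `y` and all sufficiently small real `t`,
`Σ_{n≥0} Π_n(x,y) tⁿ = 1/√(1 - 2yt + (y²-4x)t²)`. -/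
theorem hybridPi_ogf (x y : ℝ) :
    ∃ ε > 0, ∀ t : ℝ, |t| < ε →
      HasSum (fun n : ℕ => hybridPi n x y * t ^ n)
        (1 / Real.sqrt (1 - 2 * y * t + (y ^ 2 - 4 * x) * t ^ 2)) := by
  refine ⟨min (1/(2*(|y|+1))) (1/(8*(|x|+1))), by positivity, ?_⟩
  intro t ht
  have hy0 : (0:ℝ) < |y| + 1 := by positivity
  have hx0 : (0:ℝ) < |x| + 1 := by positivity
  have h1 : |t| < 1/(2*(|y|+1)) := lt_of_lt_of_le ht (min_le_left _ _)
  have h2 : |t| < 1/(8*(|x|+1)) := lt_of_lt_of_le ht (min_le_right _ _)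
  set w := y * t with hwdef
  have hw : |w| < 1/2 := by
    rw [hwdef, abs_mul]
    calc |y| * |t| ≤ (|y|+1) * |t| := by
          apply mul_le_mul_of_nonneg_right (by linarith) (abs_nonneg t)
      _ < (|y|+1) * (1/(2*(|y|+1))) := by
          apply mul_lt_mul_of_pos_left h1 hy0
      _ = 1/2 := by field_simp
  have hw1 : (0:ℝ) < 1 - w := by
    have := abs_lt.mp hw; linarith [this.2]
  have hw1' : (1:ℝ)/2 < 1 - |w| := by linarith
  have hw1half : (1:ℝ)/2 < 1 - w := by
    have := abs_lt.mp hw; linarith [this.2]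
  have hxt : |x| * t^2 < 1/64 := by
    have ht2 : t^2 < (1/(8*(|x|+1)))^2 := by
      rw [← sq_abs]
      apply sq_lt_sq' _ h2
      · have : (0:ℝ) < 1/(8*(|x|+1)) := by positivity
        linarith [abs_nonneg t]
    calc |x| * t^2 ≤ (|x|+1) * t^2 := by
          apply mul_le_mul_of_nonneg_right (by linarith) (sq_nonneg t)
      _ < (|x|+1) * (1/(8*(|x|+1)))^2 := by
          apply mul_lt_mul_of_pos_left ht2 hx0
      _ = 1/(64*(|x|+1)) := by field_simp; ring
      _ ≤ 1/64 := by
          apply div_le_div_of_nonneg_left (by norm_num) (by norm_num)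
          nlinarith [abs_nonneg x]
  set u := x * t^2 / (1-w)^2 with hudef
  have hu : |u| < 1/8 := by
    rw [hudef, abs_div, abs_of_pos (by positivity : (0:ℝ) < (1-w)^2)]
    rw [div_lt_iff₀ (by positivity)]
    have h4 : (1:ℝ)/4 < (1-w)^2 := by nlinarith
    rw [abs_mul, abs_of_nonneg (sq_nonneg t)]
    nlinarith [abs_nonneg x, sq_nonneg t]
  have h14u : (0:ℝ) < 1 - 4*u := by
    have := abs_lt.mp hu; linarith [this.2]
  -- the double-indexed family
  set A : ℕ → ℝ := fun k => (Nat.centralBinom k : ℝ) * x^k * t^(2*k) with hAdef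
  set a : ℕ × ℕ → ℝ :=
    fun p => A p.1 * (((p.2 + 2*p.1).choose (2*p.1) : ℝ) * w^p.2) with hadef
  have hInner : ∀ k : ℕ, HasSum (fun m => (((m + 2*k).choose (2*k) : ℝ)) * w^m)
      (1/(1-w)^(2*k+1)) := fun k =>
    hasSum_choose_mul_geometric_of_norm_lt_one (2*k) (by rw [Real.norm_eq_abs]; linarith)
  have hInnerAbs : ∀ k : ℕ, HasSum (fun m => (((m + 2*k).choose (2*k) : ℝ)) * |w|^m)
      (1/(1-|w|)^(2*k+1)) := fun k =>
    hasSum_choose_mul_geometric_of_norm_lt_one (2*k)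
      (by rw [Real.norm_eq_abs, abs_abs]; linarith)
  have hAbsEq : ∀ p : ℕ × ℕ, |a p| =
      ((Nat.centralBinom p.1 : ℝ) * |x|^p.1 * t^(2*p.1)) *
        (((p.2 + 2*p.1).choose (2*p.1) : ℝ) * |w|^p.2) := by
    intro p
    rw [hadef]
    simp only [abs_mul, abs_pow, Nat.abs_cast, hAdef]
    rw [pow_mul, pow_mul, sq_abs]
  have hs1 : ∀ k : ℕ, Summable (fun m => |a (k, m)|) := by
    intro k
    simp only [hAbsEq]
    exact ((hInnerAbs k).summable).mul_left _
  have htsum1 : ∀ k : ℕ, ∑' m, |a (k, m)| =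
      ((Nat.centralBinom k : ℝ) * |x|^k * t^(2*k)) * (1/(1-|w|)^(2*k+1)) := by
    intro k
    simp only [hAbsEq]
    exact ((hInnerAbs k).mul_left _).tsum_eq
  have h1w : (0:ℝ) < 1 - |w| := by linarith
  have hs2 : Summable (fun k => ∑' m, |a (k, m)|) := by
    simp only [htsum1]
    apply Summable.of_nonneg_of_le (fun k => ?_) (fun k => ?_)
      ((summable_geometric_of_lt_one (by positivity)
        (by nlinarith [abs_nonneg x, sq_nonneg t] : 16 * (|x| * t^2) < 1)).mul_left 2)
    · have ht2k : (0:ℝ) ≤ t^(2*k) := by rw [pow_mul]; positivity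
      exact mul_nonneg (mul_nonneg (mul_nonneg (Nat.cast_nonneg _) (by positivity)) ht2k)
        (one_div_pos.mpr (pow_pos h1w (2*k+1))).le
    · have hc : (Nat.centralBinom k : ℝ) ≤ 4^k := by exact_mod_cast centralBinom_le_four_pow k
      have hinv : (1:ℝ)/(1-|w|) ≤ 2 := by
        rw [div_le_iff₀ (by linarith)]; linarith
      have hq := (one_div_pos.mpr h1w).le
      have hq2 : (1/(1-|w|))^(2*k+1) ≤ (2:ℝ)^(2*k+1) := pow_le_pow_left₀ hq hinv _
      calc (Nat.centralBinom k : ℝ) * |x|^k * t^(2*k) * (1/(1-|w|)^(2*k+1))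
          = (Nat.centralBinom k : ℝ) * |x|^k * (t^2)^k * (1/(1-|w|))^(2*k+1) := by
            rw [div_pow, one_pow, ← pow_mul]
        _ ≤ 4^k * |x|^k * (t^2)^k * (2:ℝ)^(2*k+1) := by
            apply mul_le_mul _ hq2 (pow_nonneg hq _) (by positivity)
            apply mul_le_mul_of_nonneg_right _ (by positivity)
            exact mul_le_mul_of_nonneg_right hc (by positivity)
        _ = 2 * (16 * (|x| * t ^ 2)) ^ k := by
            have h2p : (2:ℝ)^(2*k+1) = 2 * 4^k := by
              rw [pow_succ, pow_mul]; norm_num [mul_comm]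
            rw [h2p, show (16:ℝ) = 4*4 by norm_num, mul_pow, mul_pow, mul_pow]; ring
  have SummAbs : Summable (fun p : ℕ × ℕ => |a p|) :=
    (summable_prod_of_nonneg (fun p => abs_nonneg _)).mpr ⟨hs1, hs2⟩
  have hSa : Summable a := by
    have h : Summable (fun p : ℕ × ℕ => ‖a p‖) := by simpa [Real.norm_eq_abs] using SummAbs
    exact h.of_norm
  obtain ⟨S, hA⟩ := hSa
  have hg := hA.prod_fiberwise (fun k => (hInner k).mul_left (A k))
  have hcent := (hasSum_central u hu).mul_left (1/(1-w))
  have hne : (1-w) ≠ 0 := ne_of_gt hw1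
  have hfun : (fun k : ℕ => (1/(1-w)) * ((Nat.centralBinom k : ℝ) * u^k))
      = fun k => A k * (1/(1-w)^(2*k+1)) := by
    funext k
    simp only [hAdef, hudef]
    have hpow : (1-w)^(2*k+1) = ((1-w)^2)^k * (1-w) := by rw [pow_succ, pow_mul]
    rw [div_pow, mul_pow, hpow, pow_mul]
    have hne2 : ((1-w)^2)^k ≠ 0 := pow_ne_zero _ (pow_ne_zero _ hne)
    field_simp
  have hg' : HasSum (fun k => A k * (1/(1-w)^(2*k+1))) ((1/(1-w)) * (1/Real.sqrt (1-4*u))) :=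
    hfun ▸ hcent
  have hS : S = (1/(1-w)) * (1/Real.sqrt (1-4*u)) := hg.unique hg'
  have hrhs : 1/Real.sqrt (1 - 2*y*t + (y^2-4*x)*t^2) = (1/(1-w)) * (1/Real.sqrt (1-4*u)) := by
    have hexp : 1 - 2*y*t + (y^2-4*x)*t^2 = (1-w)^2 * (1-4*u) := by
      rw [hudef, hwdef]; have hne' : (1:ℝ) - y*t ≠ 0 := hne; field_simp; ring
    rw [hexp, Real.sqrt_mul (sq_nonneg _), Real.sqrt_sq hw1.le, one_div, mul_inv, one_div, one_div]
  -- fibers over n = 2k + m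
  have hfib : ∀ n : ℕ, HasSum (fun p : (fun q : ℕ × ℕ => 2*q.1 + q.2) ⁻¹' {n} => a p)
      (∑ k ∈ range (n/2+1), a (k, n - 2*k)) := by
    intro n
    have h1 : HasSum (fun k : {k // k ∈ range (n/2+1)} => a (k.1, n - 2*k.1))
        (∑ k ∈ range (n/2+1), a (k, n - 2*k)) := by
      rw [← Finset.sum_coe_sort (range (n/2+1)) (fun k => a (k, n - 2*k))]
      exact hasSum_fintype _
    apply (fiberEquiv n).hasSum_iff.mp
    have hcomp : (fun p : ((fun q : ℕ × ℕ => 2*q.1 + q.2) ⁻¹' {n}) => a p) ∘ (fiberEquiv n)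
        = fun k => a (k.1, n - 2*k.1) := rfl
    rw [hcomp]; exact h1
  have halg : ∀ n : ℕ, ∑ k ∈ range (n/2+1), a (k, n - 2*k) = hybridPi n x y * t^n := by
    intro n
    rw [hybridPi, Finset.mul_sum, Finset.sum_mul]
    apply Finset.sum_congr rfl
    intro k hk
    have hk2 : 2*k ≤ n := by have := Finset.mem_range.mp hk; omega
    simp only [hadef, hAdef]
    rw [show n - 2*k + 2*k = n by omega]
    have hfacR : (Nat.centralBinom k : ℝ) * (n.choose (2*k) : ℝ) *
        ((k.factorial : ℝ) * (k.factorial : ℝ) * ((n-2*k).factorial : ℝ)) = (n.factorial : ℝ) := by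
      exact_mod_cast congrArg (Nat.cast : ℕ → ℝ) (nat_fac n k hk2)
    have ht' : t^n = t^(2*k) * t^(n-2*k) := by rw [← pow_add]; congr 1; omega
    rw [hwdef, mul_pow, ht', ← hfacR]
    have hk0 : (k.factorial : ℝ) ≠ 0 := Nat.cast_ne_zero.mpr k.factorial_ne_zero
    have hn0 : ((n-2*k).factorial : ℝ) ≠ 0 := Nat.cast_ne_zero.mpr (n-2*k).factorial_ne_zero
    field_simp
  have H2 := hA.tsum_fiberwise (fun q : ℕ × ℕ => 2*q.1 + q.2)
  rw [hrhs, ← hS]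
  convert H2 using 1
  · rfl
  funext n
  rw [(hfib n).tsum_eq, halg n]
end
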